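/- arXiv:1803.09216 — 2 statements merged into one kernel-verified Lean document; each statement's English description precedes it below -/
import Mathlib

section
/- Let Φ be an Orlicz function of positive lower type p_Φ^- and of positive upper type p_Φ^+ ∈ (0,1]. Then there exists a concave function Φ̃ : [0,∞) → [0,∞) which is of lower type p_Φ^- and of upper type p_Φ^+ and is equivalent to Φ, i.e. there are positive constants c₁, c₂ such that c₁ Φ̃(t) ≤ Φ(t) ≤ c₂ Φ̃(t) for all t ∈ [0,∞). -/
open MeasureTheory ENNReal Set Filter
open scoped Classical

noncomputable section

abbrev Rn (n : ℕ) : Type := EuclideanSpace ℝ (Fin n)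

/-- `Φ` is an Orlicz function. -/
def IsOrlicz (Φ : ℝ → ℝ) : Prop :=
  MonotoneOn Φ (Ici 0) ∧ Φ 0 = 0 ∧ (∀ t, 0 < t → 0 < Φ t) ∧ Tendsto Φ atTop atTop

/-- `Φ` is of lower type `p`. -/
def IsLowerType (Φ : ℝ → ℝ) (p : ℝ) : Prop :=
  ∃ C, 0 < C ∧ ∀ t, 0 ≤ t → ∀ s : ℝ, 0 < s → s < 1 → Φ (s * t) ≤ C * s ^ p * Φ t

/-- `Φ` is of upper type `p`. -/
def IsUpperType (Φ : ℝ → ℝ) (p : ℝ) : Prop :=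
  ∃ C, 0 < C ∧ ∀ t, 0 ≤ t → ∀ s : ℝ, 1 ≤ s → Φ (s * t) ≤ C * s ^ p * Φ t

/-- Extension of an Orlicz function to `ℝ≥0∞`. -/
def eorlicz (Φ : ℝ → ℝ) (a : ℝ≥0∞) : ℝ≥0∞ :=
  if a = ∞ then ∞ else ENNReal.ofReal (Φ a.toReal)

/-- The Orlicz (Luxemburg) quasi-norm of an `ℝ≥0∞`-valued function on `ℝⁿ`. -/
def orliczNorm {n : ℕ} (Φ : ℝ → ℝ) (f : Rn n → ℝ≥0∞) : ℝ≥0∞ :=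
  sInf {c : ℝ≥0∞ | 0 < c ∧ c ≠ ∞ ∧ ∫⁻ x, eorlicz Φ (f x / c) ≤ 1}

/-- The Orlicz-slice quasi-norm `‖f‖_{(E_Φ^q)_t(ℝⁿ)}` of an `ℝ≥0∞`-valued function. -/
def sliceNorm {n : ℕ} (Φ : ℝ → ℝ) (q t : ℝ) (f : Rn n → ℝ≥0∞) : ℝ≥0∞ :=
  (∫⁻ x, (orliczNorm Φ ((Metric.ball x t).indicator f) /
      orliczNorm Φ ((Metric.ball x t).indicator (fun _ => 1))) ^ q) ^ (1/q)

/-- The Orlicz-slice quasi-norm of a real-valued function. -/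
def sliceNormR {n : ℕ} (Φ : ℝ → ℝ) (q t : ℝ) (f : Rn n → ℝ) : ℝ≥0∞ :=
  sliceNorm Φ q t (fun x => ENNReal.ofReal |f x|)

/-- The centered Hardy-Littlewood maximal operator, on `ℝ≥0∞`-valued functions. -/
def maximalFn {n : ℕ} (f : Rn n → ℝ≥0∞) (x : Rn n) : ℝ≥0∞ :=
  ⨆ (r : ℝ) (_ : 0 < r), (volume (Metric.ball x r))⁻¹ * ∫⁻ y in Metric.ball x r, f y

/-- The uncentered Hardy-Littlewood maximal operator, on `ℝ≥0∞`-valued functions. -/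
def umaximalFn {n : ℕ} (f : Rn n → ℝ≥0∞) (x : Rn n) : ℝ≥0∞ :=
  ⨆ (z : Rn n) (r : ℝ) (_ : 0 < r) (_ : x ∈ Metric.ball z r),
    (volume (Metric.ball z r))⁻¹ * ∫⁻ y in Metric.ball z r, f y

/-- The centered Hardy-Littlewood maximal operator of a real-valued function. -/
def HLMax {n : ℕ} (f : Rn n → ℝ) : Rn n → ℝ≥0∞ :=
  maximalFn (fun y => ENNReal.ofReal |f y|)

/-- Tempered distributions on `ℝⁿ` with values in `F`. -/
abbrev TDist (n : ℕ) (F : Type) [NormedAddCommGroup F] [NormedSpace ℝ F] : Type :=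
  SchwartzMap (Rn n) F →L[ℝ] F

/-- `(φ_s * f)(x)` for a tempered distribution `f`, where `φ_s := s^{-n} φ(·/s)`. -/
def distConv {n : ℕ} {F : Type} [NormedAddCommGroup F] [NormedSpace ℝ F]
    (f : TDist n F) (φ : SchwartzMap (Rn n) F) (s : ℝ) (x : Rn n) : F :=
  if h : ∃ ψ : SchwartzMap (Rn n) F, ∀ y, ψ y = s ^ (-(n : ℝ)) • φ (s⁻¹ • (x - y))
  then f h.choose else 0

/-- The radial maximal function `M(f, φ)` of a tempered distribution `f`. -/
def radialMax {n : ℕ} {F : Type} [NormedAddCommGroup F] [NormedSpace ℝ F]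
    (f : TDist n F) (φ : SchwartzMap (Rn n) F) (x : Rn n) : ℝ≥0∞ :=
  ⨆ (s : ℝ) (_ : 0 < s), (‖distConv f φ s x‖₊ : ℝ≥0∞)

/-- The Orlicz-slice Hardy quasi-norm `‖f‖_{(HE_Φ^q)_t(ℝⁿ)}` of a tempered distribution,
defined via the radial maximal function associated with `φ`. -/
def hardyNorm {n : ℕ} {F : Type} [NormedAddCommGroup F] [NormedSpace ℝ F]
    (Φ : ℝ → ℝ) (q t : ℝ) (φ : SchwartzMap (Rn n) F) (f : TDist n F) : ℝ≥0∞ :=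
  sliceNorm Φ q t (radialMax f φ)

/-- `(φ_s * f)(x)` for a locally integrable function `f`. -/
def convFn {n : ℕ} (φ : SchwartzMap (Rn n) ℝ) (s : ℝ) (f : Rn n → ℝ) (x : Rn n) : ℝ :=
  ∫ y, (s ^ (-(n : ℝ)) * φ (s⁻¹ • (x - y))) * f y

/-- The radial maximal function of a (locally integrable) function `f`. -/
def radialMaxFn {n : ℕ} (φ : SchwartzMap (Rn n) ℝ) (f : Rn n → ℝ) (x : Rn n) : ℝ≥0∞ :=
  ⨆ (s : ℝ) (_ : 0 < s), (‖convFn φ s f x‖₊ : ℝ≥0∞)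

/-- The Orlicz-slice Hardy quasi-norm of a function. -/
def hardyNormFn {n : ℕ} (Φ : ℝ → ℝ) (q t : ℝ) (φ : SchwartzMap (Rn n) ℝ) (f : Rn n → ℝ) :
    ℝ≥0∞ :=
  sliceNorm Φ q t (radialMaxFn φ f)


/-- an Orlicz function of positive lower type `pm` and positive upper type
`pp ∈ (0,1]` is equivalent to a concave function of the same types. -/
theorem exists_equiv_concave (Φ : ℝ → ℝ) (pm pp : ℝ) (hpm : 0 < pm) (hpp0 : 0 < pp)
    (hpp1 : pp ≤ 1) (hΦ : IsOrlicz Φ) (hlow : IsLowerType Φ pm) (hup : IsUpperType Φ pp) :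
    ∃ Ψ : ℝ → ℝ, ConcaveOn ℝ (Ici 0) Ψ ∧ (∀ t : ℝ, 0 ≤ t → 0 ≤ Ψ t) ∧
      IsLowerType Ψ pm ∧ IsUpperType Ψ pp ∧
      ∃ c₁ c₂ : ℝ, 0 < c₁ ∧ 0 < c₂ ∧
        ∀ t : ℝ, 0 ≤ t → c₁ * Ψ t ≤ Φ t ∧ Φ t ≤ c₂ * Ψ t := by
  obtain ⟨hmono, h0, hposΦ, -⟩ := hΦ
  obtain ⟨Cl, hCl, hl⟩ := hlow
  obtain ⟨Cu, hCu, hu⟩ := hup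
  set C' : ℝ := max 1 Cu with hC'
  have hC'1 : (1:ℝ) ≤ C' := le_max_left _ _
  have hC'0 : (0:ℝ) < C' := lt_of_lt_of_le one_pos hC'1
  have hCuC' : Cu ≤ C' := le_max_right _ _
  have hΦnn : ∀ t, 0 ≤ t → 0 ≤ Φ t := by
    intro t ht
    rcases eq_or_lt_of_le ht with h | h
    · simp [← h, h0]
    · exact (hposΦ t h).le
  set f : ℝ → ℝ → ℝ := fun s t => Φ s + (Φ s / s) * t with hf
  set Ψ : ℝ → ℝ := fun t => ⨅ s : Set.Ioi (0:ℝ), f s t with hΨdef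
  have hfnn : ∀ (s : Set.Ioi (0:ℝ)) (t : ℝ), 0 ≤ t → 0 ≤ f s t := by
    intro s t ht
    have hs : (0:ℝ) < s := s.2
    have := (hposΦ s hs).le
    have : 0 ≤ Φ (s:ℝ) / s := div_nonneg this hs.le
    simp only [hf]
    positivity
  have hbdd : ∀ t, 0 ≤ t → BddBelow (Set.range fun s : Set.Ioi (0:ℝ) => f s t) := by
    intro t ht
    refine ⟨0, ?_⟩
    rintro x ⟨s, rfl⟩
    exact hfnn s t ht
  have hΨnn : ∀ t, 0 ≤ t → 0 ≤ Ψ t := by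
    intro t ht
    exact le_ciInf fun s => hfnn s t ht
  have hΨle : ∀ (s : Set.Ioi (0:ℝ)) (t : ℝ), 0 ≤ t → Ψ t ≤ f s t := by
    intro s t ht
    exact ciInf_le (hbdd t ht) s
  -- Ψ t ≤ 2 Φ t for t > 0
  have hΨ2 : ∀ t, 0 < t → Ψ t ≤ 2 * Φ t := by
    intro t ht
    have h1 := hΨle ⟨t, ht⟩ t ht.le
    have h2 : f t t = 2 * Φ t := by
      simp only [hf]
      field_simp
      ring
    simpa [h2] using h1
  -- Ψ 0 ≤ 0
  have hΨ0 : Ψ 0 ≤ 0 := by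
    by_contra hcon
    push_neg at hcon
    set ε := Ψ 0 / 2 with hε
    have hε0 : 0 < ε := by positivity
    have hΦ1 : 0 < Φ 1 := hposΦ 1 one_pos
    set x := ε / (Cl * Φ 1) with hx
    have hx0 : 0 < x := by positivity
    set a := min (1/2 : ℝ) (x ^ (1/pm)) with ha
    have ha0 : 0 < a := lt_min (by norm_num) (Real.rpow_pos_of_pos hx0 _)
    have ha1 : a < 1 := lt_of_le_of_lt (min_le_left _ _) (by norm_num)
    have h1 : Φ a ≤ Cl * a ^ pm * Φ 1 := by
      have := hl 1 zero_le_one a ha0 ha1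
      simpa using this
    have h2 : a ^ pm ≤ x := by
      calc a ^ pm ≤ (x ^ (1/pm)) ^ pm :=
            Real.rpow_le_rpow ha0.le (min_le_right _ _) hpm.le
        _ = x ^ ((1/pm) * pm) := by rw [← Real.rpow_mul hx0.le]
        _ = x ^ (1:ℝ) := by rw [one_div_mul_cancel hpm.ne']
        _ = x := Real.rpow_one _
    have h3 : Cl * a ^ pm * Φ 1 ≤ ε := by
      have : Cl * a ^ pm * Φ 1 ≤ Cl * x * Φ 1 :=
        mul_le_mul_of_nonneg_right (mul_le_mul_of_nonneg_left h2 hCl.le) hΦ1.le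
      have hxe : Cl * x * Φ 1 = ε := by
        rw [hx]; field_simp
      linarith
    have h4 : Ψ 0 ≤ Φ a := by
      have := hΨle ⟨a, ha0⟩ 0 le_rfl
      simpa [hf] using this
    linarith
  have hΨ2' : ∀ t, 0 ≤ t → Ψ t ≤ 2 * Φ t := by
    intro t ht
    rcases eq_or_lt_of_le ht with h | h
    · rw [← h]; simpa [h0] using hΨ0
    · exact hΨ2 t h
  -- Φ ≤ C' Ψ
  have hΦle : ∀ t, 0 ≤ t → Φ t ≤ C' * Ψ t := by
    intro t ht
    have key : ∀ s : Set.Ioi (0:ℝ), Φ t / C' ≤ f s t := by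
      rintro ⟨s, hs⟩
      have hs : (0:ℝ) < s := hs
      have hΦs : 0 ≤ Φ s := hΦnn s hs.le
      rcases le_or_gt t s with hts | hst
      · have h1 : Φ t ≤ Φ s := hmono ht hs.le hts
        have h2 : 0 ≤ Φ s / s * t := mul_nonneg (div_nonneg hΦs hs.le) ht
        have h3 : Φ t / C' ≤ Φ t := div_le_self (hΦnn t ht) hC'1
        simp only [hf]
        linarith
      · have hts1 : 1 ≤ t / s := (one_le_div hs).mpr hst.le
        have e : (t / s) * s = t := div_mul_cancel₀ t hs.ne'
        have h1 : Φ t ≤ Cu * (t / s) ^ pp * Φ s := by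
          have := hu s hs.le (t / s) hts1
          rwa [e] at this
        have h2 : (t / s) ^ pp ≤ t / s := by
          calc (t / s) ^ pp ≤ (t / s) ^ (1:ℝ) :=
                Real.rpow_le_rpow_of_exponent_le hts1 hpp1
            _ = t / s := Real.rpow_one _
        have h3 : Φ t ≤ Cu * (Φ s / s * t) := by
          have h4 : Cu * (t / s) ^ pp * Φ s ≤ Cu * (t / s) * Φ s :=
            mul_le_mul_of_nonneg_right (mul_le_mul_of_nonneg_left h2 hCu.le) hΦs
          have h5 : Cu * (t / s) * Φ s = Cu * (Φ s / s * t) := by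
            field_simp
          linarith
        have h6 : 0 ≤ Φ s / s * t := mul_nonneg (div_nonneg hΦs hs.le) ht
        have h7 : Cu * (Φ s / s * t) ≤ C' * (Φ s / s * t) :=
          mul_le_mul_of_nonneg_right hCuC' h6
        have h8 : Φ t ≤ C' * (Φ s + Φ s / s * t) := by nlinarith
        simp only [hf]
        rw [div_le_iff₀ hC'0]
        linarith [h8, mul_comm C' (Φ s + Φ s / s * t)]
    have h9 : Φ t / C' ≤ Ψ t := le_ciInf key
    rw [div_le_iff₀ hC'0] at h9
    linarith [mul_comm (Ψ t) C']
  -- concavity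
  have hconc : ConcaveOn ℝ (Ici 0) Ψ := by
    refine ⟨convex_Ici 0, ?_⟩
    intro x hx y hy a b ha hb hab
    simp only [smul_eq_mul]
    have hx' : (0:ℝ) ≤ x := hx
    have hy' : (0:ℝ) ≤ y := hy
    refine le_ciInf fun s => ?_
    have e : a * f s x + b * f s y = f s (a * x + b * y) := by
      simp only [hf]
      linear_combination (Φ (s:ℝ)) * hab
    have h1 : a * Ψ x ≤ a * f s x :=
      mul_le_mul_of_nonneg_left (hΨle s x hx') ha
    have h2 : b * Ψ y ≤ b * f s y :=
      mul_le_mul_of_nonneg_left (hΨle s y hy') hb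
    linarith
  refine ⟨Ψ, hconc, hΨnn, ⟨2 * Cl * C', by positivity, ?_⟩,
    ⟨2 * Cu * C', by positivity, ?_⟩, 1/2, C', by norm_num, hC'0, ?_⟩
  · intro t ht s hs0 hs1
    have h1 : Ψ (s * t) ≤ 2 * Φ (s * t) := hΨ2' _ (mul_nonneg hs0.le ht)
    have h2 : Φ (s * t) ≤ Cl * s ^ pm * Φ t := hl t ht s hs0 hs1
    have h3 : Φ t ≤ C' * Ψ t := hΦle t ht
    have hsp : 0 ≤ s ^ pm := Real.rpow_nonneg hs0.le _
    have h4 := mul_le_mul_of_nonneg_left h3 (mul_nonneg hCl.le hsp)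
    nlinarith
  · intro t ht s hs1
    have hs0 : (0:ℝ) < s := lt_of_lt_of_le one_pos hs1
    have h1 : Ψ (s * t) ≤ 2 * Φ (s * t) := hΨ2' _ (mul_nonneg hs0.le ht)
    have h2 : Φ (s * t) ≤ Cu * s ^ pp * Φ t := hu t ht s hs1
    have h3 : Φ t ≤ C' * Ψ t := hΦle t ht
    have hsp : 0 ≤ s ^ pp := Real.rpow_nonneg hs0.le _
    have h4 := mul_le_mul_of_nonneg_left h3 (mul_nonneg hCu.le hsp)
    nlinarith
  · intro t ht
    refine ⟨?_, hΦle t ht⟩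
    rcases eq_or_lt_of_le ht with h | h
    · rw [← h]
      have := hΨ0
      simp only [h0]
      linarith
    · have := hΨ2 t h
      linarith

end
end

section
/- Let t, q ∈ (0,∞) and Φ be an Orlicz function of positive lower type p_Φ^- and positive upper type p_Φ^+. Then there exist positive constants c₁, c₂, independent of t and of f, such that for every measurable f on ℝⁿ: c₁ [ tⁿ Σ_{k∈ℤⁿ} ‖f·χ_{Q_{tk}}‖_{L^Φ(ℝⁿ)}^q ]^{1/q} ≤ ( ∫_{ℝⁿ} ‖f·χ_{B(x,t)}‖_{L^Φ(ℝⁿ)}^q dx )^{1/q} ≤ c₂ [ tⁿ Σ_{k∈ℤⁿ} ‖f·χ_{Q_{tk}}‖_{L^Φ(ℝⁿ)}^q ]^{1/q}, where Q_{tk} := t(k+[0,1)ⁿ). Consequently, the Orlicz-slice space (E_Φ^q)_t(ℝⁿ) coincides with the Orlicz-amalgam space ℓ^q(L^Φ_t)(ℝⁿ) with equivalent quasi-norms. -/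
open MeasureTheory ENNReal Set Filter
open scoped Classical

noncomputable section

/-- The cube `Q_{tk} = t(k + [0,1)ⁿ)`. -/
def tCube (n : ℕ) (t : ℝ) (k : Fin n → ℤ) : Set (Rn n) :=
  {y | ∀ i, t * k i ≤ y i ∧ y i < t * (k i + 1)}

variable {n : ℕ} {Φ : ℝ → ℝ} {Cl pm : ℝ}

lemma eorlicz_mono (hΦ : IsOrlicz Φ) : Monotone (eorlicz Φ) := by
  intro a b hab
  unfold eorlicz
  rcases eq_or_ne b ∞ with hb | hb
  · simp [hb]
  · have ha : a ≠ ∞ := fun h => hb (top_le_iff.mp (h ▸ hab))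
    rw [if_neg ha, if_neg hb]
    exact ENNReal.ofReal_le_ofReal (hΦ.1 (mem_Ici.mpr toReal_nonneg)
      (mem_Ici.mpr toReal_nonneg) (toReal_mono hb hab))

lemma eorlicz_measurable (hΦ : IsOrlicz Φ) : Measurable (eorlicz Φ) :=
  (eorlicz_mono hΦ).measurable

lemma orliczNorm_mono (hΦ : IsOrlicz Φ) {g h : Rn n → ℝ≥0∞} (hle : ∀ x, g x ≤ h x) :
    orliczNorm Φ g ≤ orliczNorm Φ h := by
  apply sInf_le_sInf
  rintro c ⟨hc0, hc1, hc2⟩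
  refine ⟨hc0, hc1, le_trans (lintegral_mono fun x => ?_) hc2⟩
  exact eorlicz_mono hΦ (ENNReal.div_le_div_right (hle x) c)

lemma mem_orliczSet_of_le (hΦ : IsOrlicz Φ) {g : Rn n → ℝ≥0∞} {c c' : ℝ≥0∞}
    (hc : c ∈ {c : ℝ≥0∞ | 0 < c ∧ c ≠ ∞ ∧ ∫⁻ x, eorlicz Φ (g x / c) ≤ 1})
    (hcc' : c ≤ c') (h' : c' ≠ ∞) :
    c' ∈ {c : ℝ≥0∞ | 0 < c ∧ c ≠ ∞ ∧ ∫⁻ x, eorlicz Φ (g x / c) ≤ 1} := by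
  obtain ⟨hc0, hc1, hc2⟩ := hc
  refine ⟨lt_of_lt_of_le hc0 hcc', h', le_trans (lintegral_mono fun x => ?_) hc2⟩
  exact eorlicz_mono hΦ (ENNReal.div_le_div_left hcc' _)

lemma integral_le_one_of_lt (hΦ : IsOrlicz Φ) {g : Rn n → ℝ≥0∞} {μ : ℝ≥0∞}
    (hμ : orliczNorm Φ g < μ) (hμ' : μ ≠ ∞) : ∫⁻ x, eorlicz Φ (g x / μ) ≤ 1 := by
  rw [orliczNorm, sInf_lt_iff] at hμ
  obtain ⟨c, hc, hcμ⟩ := hμ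
  exact (mem_orliczSet_of_le hΦ hc hcμ.le hμ').2.2

lemma orliczNorm_zero (hΦ : IsOrlicz Φ) : orliczNorm Φ (fun _ : Rn n => 0) = 0 := by
  rw [orliczNorm, ← le_zero_iff]
  apply le_of_forall_gt_imp_ge_of_dense
  intro c hc
  rcases eq_or_ne c ∞ with rfl | hc'
  · exact le_top
  · apply sInf_le
    refine ⟨hc, hc', ?_⟩
    simp [eorlicz, ENNReal.zero_div, hΦ.2.1]
lemma Phi_nonneg (hΦ : IsOrlicz Φ) {u : ℝ} (hu : 0 ≤ u) : 0 ≤ Φ u := by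
  rcases eq_or_lt_of_le hu with h | h
  · rw [← h, hΦ.2.1]
  · exact (hΦ.2.2.1 u h).le

/-- The key scaling lemma. -/
lemma key_scale (hΦ : IsOrlicz Φ) (hCl : 0 < Cl) (hpm : 0 < pm)
    (hlow : ∀ u, 0 ≤ u → ∀ s : ℝ, 0 < s → s < 1 → Φ (s * u) ≤ Cl * s ^ pm * Φ u)
    {g : Rn n → ℝ≥0∞} {lam : ℝ≥0∞} (hl : 0 < lam) (hl' : lam ≠ ∞) {M : ℝ} (hM : 1 ≤ M)
    (hint : ∫⁻ x, eorlicz Φ (g x / lam) ≤ ENNReal.ofReal M) :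
    orliczNorm Φ g ≤ ENNReal.ofReal (max 2 ((Cl * M) ^ (1/pm))) * lam := by
  set A : ℝ := max 2 ((Cl * M) ^ (1/pm)) with hA
  have hA2 : (2:ℝ) ≤ A := le_max_left _ _
  have hA0 : 0 < A := by linarith
  have hA1 : 1 < A := by linarith
  have hClM : 0 ≤ Cl * M := by positivity
  have hApos : 0 < A ^ pm := Real.rpow_pos_of_pos hA0 _
  have hApm : Cl * M ≤ A ^ pm := by
    calc Cl * M = ((Cl * M) ^ (1/pm)) ^ pm := by
          rw [← Real.rpow_mul hClM, one_div_mul_cancel hpm.ne', Real.rpow_one]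
      _ ≤ A ^ pm := Real.rpow_le_rpow (Real.rpow_nonneg hClM _) (le_max_right _ _) hpm.le
  have hinvpow : (A⁻¹) ^ pm = (A ^ pm)⁻¹ := Real.inv_rpow hA0.le _
  have hkey : Cl * A⁻¹ ^ pm * M ≤ 1 := by
    rw [hinvpow]
    calc Cl * (A ^ pm)⁻¹ * M = (Cl * M) / (A ^ pm) := by ring
      _ ≤ 1 := (div_le_one hApos).mpr hApm
  have hcoef : (0:ℝ) < Cl * A⁻¹ ^ pm := by positivity
  have hofA0 : ENNReal.ofReal A ≠ 0 := by simp [ENNReal.ofReal_eq_zero, not_le, hA0]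
  -- pointwise estimate
  have hpt : ∀ a : ℝ≥0∞, eorlicz Φ (a / (ENNReal.ofReal A * lam)) ≤
      ENNReal.ofReal (Cl * A⁻¹ ^ pm) * eorlicz Φ (a / lam) := by
    intro a
    have hAlam0 : ENNReal.ofReal A * lam ≠ 0 := by
      simp [hl.ne', ENNReal.ofReal_eq_zero, not_le, hA0]
    have hAlam' : ENNReal.ofReal A * lam ≠ ∞ := ENNReal.mul_ne_top ofReal_ne_top hl'
    have hcoef0 : ENNReal.ofReal (Cl * A⁻¹ ^ pm) ≠ 0 := by
      simp [ENNReal.ofReal_eq_zero, not_le, hcoef]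
    rcases eq_or_ne a ∞ with rfl | ha
    · rw [ENNReal.top_div_of_ne_top hAlam', ENNReal.top_div_of_ne_top hl']
      simp only [eorlicz, if_pos rfl, if_true]
      rw [ENNReal.mul_top hcoef0]
    · have hb : a / lam ≠ ∞ := by
        simp only [ne_eq, ENNReal.div_eq_top, not_or, not_and_or]
        exact ⟨Or.inr hl.ne', Or.inl ha⟩
      have hab : a / (ENNReal.ofReal A * lam) = (a / lam) / ENNReal.ofReal A := by
        rw [div_eq_mul_inv, ENNReal.mul_inv (Or.inl hofA0) (Or.inl ofReal_ne_top),
          div_eq_mul_inv, div_eq_mul_inv]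
        ring
      have hab' : a / (ENNReal.ofReal A * lam) ≠ ∞ := by
        simp only [ne_eq, ENNReal.div_eq_top, not_or, not_and_or]
        exact ⟨Or.inr hAlam0, Or.inl ha⟩
      rw [eorlicz, if_neg hab', eorlicz, if_neg hb, hab]
      rw [ENNReal.toReal_div, ENNReal.toReal_ofReal hA0.le]
      have h2 := hlow (a/lam).toReal toReal_nonneg A⁻¹ (by positivity) (by
        rw [inv_lt_one_iff₀]; right; exact hA1)
      rw [inv_mul_eq_div] at h2
      calc ENNReal.ofReal (Φ ((a/lam).toReal / A)) ≤
          ENNReal.ofReal (Cl * A⁻¹ ^ pm * Φ (a/lam).toReal) := ENNReal.ofReal_le_ofReal h2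
        _ = ENNReal.ofReal (Cl * A⁻¹ ^ pm) * ENNReal.ofReal (Φ (a/lam).toReal) :=
            ENNReal.ofReal_mul hcoef.le
  -- conclude
  apply sInf_le
  refine ⟨ENNReal.mul_pos hofA0 hl.ne', ENNReal.mul_ne_top ofReal_ne_top hl', ?_⟩
  calc ∫⁻ x, eorlicz Φ (g x / (ENNReal.ofReal A * lam))
      ≤ ∫⁻ x, ENNReal.ofReal (Cl * A⁻¹ ^ pm) * eorlicz Φ (g x / lam) :=
        lintegral_mono fun x => hpt (g x)
    _ = ENNReal.ofReal (Cl * A⁻¹ ^ pm) * ∫⁻ x, eorlicz Φ (g x / lam) :=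
        lintegral_const_mul' _ _ ofReal_ne_top
    _ ≤ ENNReal.ofReal (Cl * A⁻¹ ^ pm) * ENNReal.ofReal M :=
        mul_le_mul_right hint _
    _ = ENNReal.ofReal (Cl * A⁻¹ ^ pm * M) := (ENNReal.ofReal_mul (by positivity)).symm
    _ ≤ 1 := by rw [← ENNReal.ofReal_one]; exact ENNReal.ofReal_le_ofReal hkey

/-- Quasi-additivity: the norm of a finite sum is controlled by a max. -/
lemma key_sum_sup (hΦ : IsOrlicz Φ) (hCl : 0 < Cl) (hpm : 0 < pm)
    (hlow : ∀ u, 0 ≤ u → ∀ s : ℝ, 0 < s → s < 1 → Φ (s * u) ≤ Cl * s ^ pm * Φ u)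
    (N : ℕ) (hN : 1 ≤ N) {ι : Type} (S : Finset ι) (hS : S.card ≤ N)
    (g : ι → Rn n → ℝ≥0∞) (hg : ∀ i, Measurable (g i)) :
    orliczNorm Φ (fun x => ∑ i ∈ S, g i x) ≤
      ENNReal.ofReal (max 2 ((Cl * N) ^ (1/pm)) * N) * S.sup (fun i => orliczNorm Φ (g i)) := by
  set T : ℝ≥0∞ := ENNReal.ofReal (max 2 ((Cl * N) ^ (1/pm)) * N) with hT
  have hN0 : (0:ℝ) < (N:ℝ) := by exact_mod_cast hN
  have hT0 : T ≠ 0 := by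
    rw [hT, ne_eq, ENNReal.ofReal_eq_zero, not_le]
    have : (0:ℝ) < max 2 ((Cl * N) ^ (1/pm)) := lt_of_lt_of_le two_pos (le_max_left _ _)
    positivity
  have hT' : T ≠ ∞ := ofReal_ne_top
  set L : ℝ≥0∞ := S.sup (fun i => orliczNorm Φ (g i)) with hL
  -- main step: for every finite μ > L, the bound holds with μ
  have main : ∀ μ : ℝ≥0∞, L < μ → μ ≠ ∞ → orliczNorm Φ (fun x => ∑ i ∈ S, g i x) ≤ T * μ := by
    intro μ hμ hμ'
    have hμ0 : 0 < μ := lt_of_le_of_lt (zero_le) hμ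
    have hint : ∀ i ∈ S, ∫⁻ x, eorlicz Φ (g i x / μ) ≤ 1 := by
      intro i hi
      exact integral_le_one_of_lt hΦ (lt_of_le_of_lt (Finset.le_sup (f := fun i => orliczNorm Φ (g i)) hi) hμ) hμ'
    rcases S.eq_empty_or_nonempty with rfl | hSne
    · simp only [Finset.sum_empty]
      rw [orliczNorm_zero hΦ]
      exact zero_le
    -- the sum divided by N*μ is pointwise below the sup divided by μ
    have hptsum : ∀ x, eorlicz Φ ((∑ i ∈ S, g i x) / ((N:ℝ≥0∞) * μ)) ≤
        ∑ i ∈ S, eorlicz Φ (g i x / μ) := by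
      intro x
      obtain ⟨i₀, hi₀, hsup⟩ := S.exists_mem_eq_sup hSne (fun i => g i x)
      have h1 : (∑ i ∈ S, g i x) / ((N:ℝ≥0∞) * μ) ≤ g i₀ x / μ := by
        have h2 : ∑ i ∈ S, g i x ≤ (N:ℝ≥0∞) * g i₀ x := by
          calc ∑ i ∈ S, g i x ≤ S.card • (g i₀ x) := by
                apply Finset.sum_le_card_nsmul
                intro i hi
                rw [← hsup]; exact Finset.le_sup (f := fun i => g i x) hi
            _ = (S.card : ℝ≥0∞) * g i₀ x := by rw [nsmul_eq_mul]
            _ ≤ (N:ℝ≥0∞) * g i₀ x := by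
                apply mul_le_mul_left
                exact_mod_cast hS
        calc (∑ i ∈ S, g i x) / ((N:ℝ≥0∞) * μ) ≤ ((N:ℝ≥0∞) * g i₀ x) / ((N:ℝ≥0∞) * μ) :=
              ENNReal.div_le_div_right h2 _
          _ = g i₀ x / μ := ENNReal.mul_div_mul_left _ _ (by exact_mod_cast hN0.ne') (by simp)
      calc eorlicz Φ ((∑ i ∈ S, g i x) / ((N:ℝ≥0∞) * μ)) ≤ eorlicz Φ (g i₀ x / μ) :=
            eorlicz_mono hΦ h1
        _ ≤ ∑ i ∈ S, eorlicz Φ (g i x / μ) := by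
            apply Finset.single_le_sum (fun i _ => zero_le) hi₀
    have hintsum : ∫⁻ x, eorlicz Φ ((∑ i ∈ S, g i x) / ((N:ℝ≥0∞) * μ)) ≤ ENNReal.ofReal N := by
      calc ∫⁻ x, eorlicz Φ ((∑ i ∈ S, g i x) / ((N:ℝ≥0∞) * μ))
          ≤ ∫⁻ x, ∑ i ∈ S, eorlicz Φ (g i x / μ) := lintegral_mono hptsum
        _ = ∑ i ∈ S, ∫⁻ x, eorlicz Φ (g i x / μ) := by
            apply lintegral_finset_sum
            intro i _
            exact (eorlicz_measurable hΦ).comp ((hg i).div_const μ)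
        _ ≤ ∑ _i ∈ S, 1 := Finset.sum_le_sum hint
        _ = (S.card : ℝ≥0∞) := by simp
        _ ≤ ENNReal.ofReal N := by
            rw [ENNReal.ofReal_natCast]
            exact_mod_cast hS
    have := key_scale (n := n) hΦ hCl hpm hlow (g := fun x => ∑ i ∈ S, g i x)
      (lam := (N:ℝ≥0∞) * μ) (ENNReal.mul_pos (by exact_mod_cast (Nat.pos_of_ne_zero (by omega)).ne') hμ0.ne') (by
        exact ENNReal.mul_ne_top (by simp) hμ') (M := (N:ℝ)) (by exact_mod_cast hN) (by
        simpa [ENNReal.ofReal_natCast] using hintsum)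
    calc orliczNorm Φ (fun x => ∑ i ∈ S, g i x)
        ≤ ENNReal.ofReal (max 2 ((Cl * N) ^ (1/pm))) * ((N:ℝ≥0∞) * μ) := this
      _ = T * μ := by
          rw [hT, ENNReal.ofReal_mul (by positivity), mul_assoc, ENNReal.ofReal_natCast]
  -- pass to the limit μ → L
  rcases eq_or_ne L ∞ with hLtop | hLtop
  · rw [hLtop, ENNReal.mul_top hT0]; exact le_top
  apply le_of_forall_gt_imp_ge_of_dense
  intro c hc
  rcases eq_or_ne c ∞ with rfl | hc'
  · exact le_top
  · have hμdef : L < c / T := by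
      rw [ENNReal.lt_div_iff_mul_lt (Or.inl hT0) (Or.inl hT'), mul_comm]
      exact hc
    have hcT : c / T ≠ ∞ := by
      simp only [ne_eq, ENNReal.div_eq_top, not_or, not_and_or]
      exact ⟨Or.inr hT0, Or.inl hc'⟩
    calc orliczNorm Φ (fun x => ∑ i ∈ S, g i x) ≤ T * (c / T) := main _ hμdef hcT
      _ ≤ c := ENNReal.mul_div_le

lemma key_sum_q (hΦ : IsOrlicz Φ) (hCl : 0 < Cl) (hpm : 0 < pm)
    (hlow : ∀ u, 0 ≤ u → ∀ s : ℝ, 0 < s → s < 1 → Φ (s * u) ≤ Cl * s ^ pm * Φ u)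
    {q : ℝ} (hq : 0 < q)
    (N : ℕ) (hN : 1 ≤ N) {ι : Type} (S : Finset ι) (hS : S.card ≤ N)
    (g : ι → Rn n → ℝ≥0∞) (hg : ∀ i, Measurable (g i)) :
    orliczNorm Φ (fun x => ∑ i ∈ S, g i x) ^ q ≤
      ENNReal.ofReal ((max 2 ((Cl * N) ^ (1/pm)) * N) ^ q) * ∑ i ∈ S, orliczNorm Φ (g i) ^ q := by
  have hbase : (0:ℝ) < max 2 ((Cl * N) ^ (1/pm)) * N := by
    have h1 : (0:ℝ) < max 2 ((Cl * N) ^ (1/pm)) := lt_of_lt_of_le two_pos (le_max_left _ _)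
    have hN0 : (0:ℝ) < (N:ℝ) := by exact_mod_cast hN
    positivity
  have hLq : (S.sup fun i => orliczNorm Φ (g i)) ^ q ≤ ∑ i ∈ S, orliczNorm Φ (g i) ^ q := by
    have hL1 : (S.sup fun i => orliczNorm Φ (g i)) ≤ (∑ i ∈ S, orliczNorm Φ (g i) ^ q) ^ (1/q) := by
      apply Finset.sup_le
      intro i hi
      have h1 : orliczNorm Φ (g i) ^ q ≤ ∑ i ∈ S, orliczNorm Φ (g i) ^ q :=
        Finset.single_le_sum (f := fun i => orliczNorm Φ (g i) ^ q) (fun _ _ => zero_le) hi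
      have := ENNReal.rpow_le_rpow h1 (by positivity : (0:ℝ) ≤ 1/q)
      rwa [← ENNReal.rpow_mul, mul_one_div_cancel hq.ne', ENNReal.rpow_one] at this
    have := ENNReal.rpow_le_rpow hL1 hq.le
    rwa [← ENNReal.rpow_mul, one_div_mul_cancel hq.ne', ENNReal.rpow_one] at this
  calc orliczNorm Φ (fun x => ∑ i ∈ S, g i x) ^ q
      ≤ (ENNReal.ofReal (max 2 ((Cl * N) ^ (1/pm)) * N) * S.sup (fun i => orliczNorm Φ (g i))) ^ q :=
        ENNReal.rpow_le_rpow (key_sum_sup hΦ hCl hpm hlow N hN S hS g hg) hq.le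
    _ = ENNReal.ofReal (max 2 ((Cl * N) ^ (1/pm)) * N) ^ q * (S.sup fun i => orliczNorm Φ (g i)) ^ q :=
        ENNReal.mul_rpow_of_nonneg _ _ hq.le
    _ ≤ ENNReal.ofReal (max 2 ((Cl * N) ^ (1/pm)) * N) ^ q * ∑ i ∈ S, orliczNorm Φ (g i) ^ q :=
        mul_le_mul_right hLq _
    _ = ENNReal.ofReal ((max 2 ((Cl * N) ^ (1/pm)) * N) ^ q) * ∑ i ∈ S, orliczNorm Φ (g i) ^ q := by
        rw [ENNReal.ofReal_rpow_of_pos hbase]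
variable {n : ℕ} {t : ℝ}

lemma mem_tCube_iff (ht : 0 < t) {y : Rn n} {k : Fin n → ℤ} :
    y ∈ tCube n t k ↔ ∀ i, k i = ⌊y i / t⌋ := by
  unfold tCube
  simp only [mem_setOf_eq]
  apply forall_congr'
  intro i
  rw [eq_comm, Int.floor_eq_iff]
  constructor
  · rintro ⟨h1, h2⟩
    constructor
    · exact (le_div_iff₀ ht).mpr (by linarith)
    · rw [div_lt_iff₀ ht]; push_cast; linarith
  · rintro ⟨h1, h2⟩
    rw [le_div_iff₀ ht] at h1
    rw [div_lt_iff₀ ht] at h2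
    constructor
    · linarith
    · push_cast at h2 ⊢; linarith

lemma tCube_preimage : tCube n t k = (MeasurableEquiv.toLp 2 (Fin n → ℝ)).symm ⁻¹'
    (Set.pi univ fun i => Ico (t * k i) (t * (k i + 1))) := by
  ext y
  simp only [tCube, mem_setOf_eq, mem_preimage, Set.mem_pi, mem_univ, forall_true_left, mem_Ico]
  exact Iff.rfl

lemma tCube_measurable {k : Fin n → ℤ} : MeasurableSet (tCube n t k) := by
  rw [tCube_preimage]
  exact (MeasurableEquiv.toLp 2 (Fin n → ℝ)).symm.measurable
    (MeasurableSet.univ_pi fun i => measurableSet_Ico)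

lemma volume_tCube (ht : 0 < t) (k : Fin n → ℤ) :
    volume (tCube n t k) = ENNReal.ofReal (t ^ n) := by
  rw [tCube_preimage]
  rw [(EuclideanSpace.volume_preserving_symm_measurableEquiv_toLp (Fin n)).measure_preimage
    ((MeasurableSet.univ_pi fun i => measurableSet_Ico).nullMeasurableSet)]
  rw [volume_pi_pi]
  have : ∀ i : Fin n, volume (Ico (t * k i) (t * (k i + 1))) = ENNReal.ofReal t := by
    intro i
    rw [Real.volume_Ico]
    congr 1
    push_cast; ring
  simp only [this, Finset.prod_const, Finset.card_univ, Fintype.card_fin]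
  rw [← ENNReal.ofReal_pow ht.le]

lemma lintegral_tsum_tCube (ht : 0 < t) (g : Rn n → ℝ≥0∞) :
    ∫⁻ x, g x = ∑' k : Fin n → ℤ, ∫⁻ x in tCube n t k, g x := by
  have hdisj : Pairwise (Function.onFun Disjoint fun k : Fin n → ℤ => tCube n t k) := by
    intro k k' hkk'
    simp only [Function.onFun, Set.disjoint_left]
    intro y hy hy'
    apply hkk'
    funext i
    rw [mem_tCube_iff ht] at hy hy'
    rw [hy i, hy' i]
  have hcover : (⋃ k : Fin n → ℤ, tCube n t k) = univ := by
    ext y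
    simp only [mem_iUnion, mem_univ, iff_true]
    exact ⟨fun i => ⌊y i / t⌋, (mem_tCube_iff ht).mpr fun i => rfl⟩
  conv_lhs => rw [← setLIntegral_univ, ← hcover]
  rw [Measure.restrict_iUnion hdisj fun k => tCube_measurable]
  rw [lintegral_sum_measure]

lemma coord_dist_le (x y : Rn n) (i : Fin n) : dist (x i) (y i) ≤ dist x y := by
  rw [EuclideanSpace.dist_eq]
  rw [show dist (x i) (y i) = Real.sqrt (dist (x i) (y i) ^ 2) by
    rw [Real.sqrt_sq dist_nonneg]]
  apply Real.sqrt_le_sqrt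
  exact Finset.single_le_sum (f := fun i => dist (x i) (y i) ^ 2)
    (fun _ _ => sq_nonneg _) (Finset.mem_univ i)

lemma ball_subset_cubes (ht : 0 < t) {k : Fin n → ℤ} {x : Rn n} (hx : x ∈ tCube n t k)
    {y : Rn n} (hy : y ∈ Metric.ball x t) :
    ∃ j ∈ Fintype.piFinset (fun _ : Fin n => Finset.Icc (-1 : ℤ) 1), y ∈ tCube n t (k + j) := by
  refine ⟨fun i => ⌊y i / t⌋ - k i, ?_, ?_⟩
  · rw [Fintype.mem_piFinset]
    intro i
    rw [Finset.mem_Icc]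
    have hxi := hx i
    have hyd : |y i - x i| ≤ dist x y := by
      rw [← Real.dist_eq, dist_comm (y i)]; exact coord_dist_le x y i
    rw [Metric.mem_ball, dist_comm] at hy
    have h1 : y i < t * (k i + 1) + t := by
      have := abs_lt.mp (lt_of_le_of_lt hyd hy)
      push_cast; nlinarith [hxi.1, hxi.2, this.1, this.2]
    have h2 : t * k i - t ≤ y i := by
      have := abs_lt.mp (lt_of_le_of_lt hyd hy)
      nlinarith [hxi.1, hxi.2, this.1, this.2]
    constructor
    · rw [le_sub_iff_add_le]
      apply Int.le_floor.mpr
      rw [le_div_iff₀ ht]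
      push_cast
      nlinarith
    · rw [sub_le_iff_le_add]
      have : ⌊y i / t⌋ < k i + 2 := by
        apply Int.floor_lt.mpr
        rw [div_lt_iff₀ ht]
        push_cast
        nlinarith
      omega
  · rw [mem_tCube_iff ht]
    intro i
    show k i + (⌊y i / t⌋ - k i) = ⌊y i / t⌋
    ring

lemma smallcube_subset_ball (ht : 0 < t) {k : Fin n → ℤ} {x : Rn n}
    (hx : x ∈ tCube n (t / (n + 1)) k) : tCube n (t / (n + 1)) k ⊆ Metric.ball x t := by
  set s : ℝ := t / (n + 1) with hs
  have hn1 : (0:ℝ) < (n:ℝ) + 1 := by positivity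
  have hs0 : 0 < s := by positivity
  intro y hy
  rw [Metric.mem_ball, dist_comm]
  have hcoord : ∀ i, dist (x i) (y i) ^ 2 ≤ s ^ 2 := by
    intro i
    have h1 := hx i
    have h2 := hy i
    have : |x i - y i| ≤ s := by
      rw [abs_le]
      constructor <;> nlinarith [h1.1, h1.2, h2.1, h2.2]
    calc dist (x i) (y i) ^ 2 = |x i - y i| ^ 2 := by rw [Real.dist_eq, sq_abs]
      _ ≤ s ^ 2 := by nlinarith [abs_nonneg (x i - y i)]
  calc dist x y = Real.sqrt (∑ i, dist (x i) (y i) ^ 2) := EuclideanSpace.dist_eq x y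
    _ ≤ Real.sqrt (n * s ^ 2) := by
        apply Real.sqrt_le_sqrt
        calc ∑ i, dist (x i) (y i) ^ 2 ≤ (Finset.univ (α := Fin n)).card • (s^2) :=
              Finset.sum_le_card_nsmul _ _ _ (fun i _ => hcoord i)
          _ = n * s ^ 2 := by simp [nsmul_eq_mul]
    _ = Real.sqrt n * s := by
        rw [Real.sqrt_mul (by positivity), Real.sqrt_sq hs0.le]
    _ < t := by
        have hsn : Real.sqrt n < (n:ℝ) + 1 := by
          rw [Real.sqrt_lt' hn1]
          nlinarith [sq_nonneg ((n:ℝ))]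
        calc Real.sqrt n * s < ((n:ℝ)+1) * s := by
              apply mul_lt_mul_of_pos_right hsn hs0
          _ = t := by rw [hs]; field_simp

lemma cube_subset_smallcubes (ht : 0 < t) {k : Fin n → ℤ} {y : Rn n} (hy : y ∈ tCube n t k) :
    ∃ j ∈ Fintype.piFinset (fun _ : Fin n => Finset.Ico (0 : ℤ) (n + 1)),
      y ∈ tCube n (t / (n + 1)) (fun i => (n + 1) * k i + j i) := by
  set s : ℝ := t / (n + 1) with hs
  have hn1 : (0:ℝ) < (n:ℝ) + 1 := by positivity
  have hs0 : 0 < s := by positivity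
  have hts : t = s * ((n:ℝ) + 1) := by rw [hs]; field_simp
  refine ⟨fun i => ⌊y i / s⌋ - (n + 1) * k i, ?_, ?_⟩
  · rw [Fintype.mem_piFinset]
    intro i
    rw [Finset.mem_Ico]
    have h1 := (hy i).1
    have h2 := (hy i).2
    rw [hts] at h1 h2
    constructor
    · rw [sub_nonneg]
      apply Int.le_floor.mpr
      rw [le_div_iff₀ hs0]
      push_cast
      nlinarith
    · have : ⌊y i / s⌋ < (n + 1) * k i + (n + 1) := by
        apply Int.floor_lt.mpr
        rw [div_lt_iff₀ hs0]
        push_cast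
        nlinarith
      omega
  · rw [mem_tCube_iff hs0]
    intro i
    show (n + 1) * k i + (⌊y i / s⌋ - (n + 1) * k i) = ⌊y i / s⌋
    ring

lemma card_piFinset_Icc : (Fintype.piFinset fun _ : Fin n => Finset.Icc (-1 : ℤ) 1).card = 3 ^ n := by
  rw [Fintype.card_piFinset]
  simp

lemma card_piFinset_Ico : (Fintype.piFinset fun _ : Fin n => Finset.Ico (0 : ℤ) (n + 1)).card
    = (n + 1) ^ n := by
  rw [Fintype.card_piFinset]
  simp

lemma upper_bound {Φ : ℝ → ℝ} {Cl pm : ℝ} (hΦ : IsOrlicz Φ) (hCl : 0 < Cl) (hpm : 0 < pm)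
    (hlow : ∀ u, 0 ≤ u → ∀ s : ℝ, 0 < s → s < 1 → Φ (s * u) ≤ Cl * s ^ pm * Φ u)
    {q : ℝ} (hq : 0 < q) {t : ℝ} (ht : 0 < t) {f : Rn n → ℝ} (hf : Measurable f) :
    (∫⁻ x, orliczNorm Φ ((Metric.ball x t).indicator fun y => ENNReal.ofReal |f y|) ^ q)
      ≤ ENNReal.ofReal ((max 2 ((Cl * (3^n:ℕ)) ^ (1/pm)) * (3^n:ℕ)) ^ q * (3^n:ℕ)) *
        (ENNReal.ofReal (t ^ n) *
          ∑' k : Fin n → ℤ, orliczNorm Φ ((tCube n t k).indicator fun x => ENNReal.ofReal |f x|) ^ q) := by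
  set F : Rn n → ℝ≥0∞ := fun y => ENNReal.ofReal |f y| with hF
  have hFm : Measurable F := hf.abs.ennreal_ofReal
  set J : Finset (Fin n → ℤ) := Fintype.piFinset fun _ : Fin n => Finset.Icc (-1 : ℤ) 1 with hJ
  set A₁ : ℝ := (max 2 ((Cl * (3^n:ℕ)) ^ (1/pm)) * (3^n:ℕ)) ^ q with hA₁
  have hA₁0 : 0 < A₁ := by
    have h1 : (0:ℝ) < max 2 ((Cl * (3^n:ℕ)) ^ (1/pm)) := lt_of_lt_of_le two_pos (le_max_left _ _)
    have h2 : (0:ℝ) < ((3^n : ℕ):ℝ) := by positivity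
    positivity
  set Nq : (Fin n → ℤ) → ℝ≥0∞ := fun k => orliczNorm Φ ((tCube n t k).indicator F) ^ q with hNq
  set G : Rn n → ℝ≥0∞ := fun x => orliczNorm Φ ((Metric.ball x t).indicator F) ^ q with hG
  -- pointwise bound on each cube
  have hbound : ∀ k : Fin n → ℤ, ∀ x ∈ tCube n t k,
      G x ≤ ENNReal.ofReal A₁ * ∑ j ∈ J, Nq (k + j) := by
    intro k x hx
    have hpt : ∀ y, (Metric.ball x t).indicator F y ≤
        ∑ j ∈ J, ((tCube n t (k + j)).indicator F) y := by
      intro y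
      rcases em (y ∈ Metric.ball x t) with hy | hy
      · obtain ⟨j, hjJ, hjy⟩ := ball_subset_cubes ht hx hy
        rw [indicator_of_mem hy]
        calc F y = ((tCube n t (k + j)).indicator F) y := (indicator_of_mem hjy F).symm
          _ ≤ ∑ j ∈ J, ((tCube n t (k + j)).indicator F) y :=
            Finset.single_le_sum (f := fun j => ((tCube n t (k + j)).indicator F) y)
              (fun _ _ => zero_le) hjJ
      · rw [indicator_of_notMem hy]; exact zero_le
    have hmono : orliczNorm Φ ((Metric.ball x t).indicator F) ≤
        orliczNorm Φ (fun y => ∑ j ∈ J, ((tCube n t (k + j)).indicator F) y) :=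
      orliczNorm_mono hΦ hpt
    calc G x ≤ orliczNorm Φ (fun y => ∑ j ∈ J, ((tCube n t (k + j)).indicator F) y) ^ q :=
          ENNReal.rpow_le_rpow hmono hq.le
      _ ≤ ENNReal.ofReal A₁ * ∑ j ∈ J, orliczNorm Φ ((tCube n t (k + j)).indicator F) ^ q := by
          rw [hA₁]
          apply key_sum_q hΦ hCl hpm hlow hq (3^n) (Nat.one_le_pow _ _ (by norm_num)) J
            (le_of_eq card_piFinset_Icc) _ (fun j => hFm.indicator tCube_measurable)
      _ = ENNReal.ofReal A₁ * ∑ j ∈ J, Nq (k + j) := rfl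
  calc (∫⁻ x, G x) = ∑' k : Fin n → ℤ, ∫⁻ x in tCube n t k, G x := lintegral_tsum_tCube ht G
    _ ≤ ∑' k : Fin n → ℤ, (ENNReal.ofReal A₁ * ∑ j ∈ J, Nq (k + j)) * ENNReal.ofReal (t ^ n) := by
        apply ENNReal.tsum_le_tsum
        intro k
        calc ∫⁻ x in tCube n t k, G x
            ≤ ∫⁻ _x in tCube n t k, (ENNReal.ofReal A₁ * ∑ j ∈ J, Nq (k + j)) :=
              lintegral_mono_ae ((ae_restrict_iff' tCube_measurable).2
                (ae_of_all _ (hbound k)))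
          _ = (ENNReal.ofReal A₁ * ∑ j ∈ J, Nq (k + j)) * volume (tCube n t k) :=
              setLIntegral_const _ _
          _ = (ENNReal.ofReal A₁ * ∑ j ∈ J, Nq (k + j)) * ENNReal.ofReal (t ^ n) := by
              rw [volume_tCube ht]
    _ = ENNReal.ofReal A₁ * ENNReal.ofReal (t ^ n) * ∑' k : Fin n → ℤ, ∑ j ∈ J, Nq (k + j) := by
        rw [← ENNReal.tsum_mul_left]
        congr 1
        funext k
        ring
    _ = ENNReal.ofReal A₁ * ENNReal.ofReal (t ^ n) * ((3^n : ℕ) * ∑' k : Fin n → ℤ, Nq k) := by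
        congr 1
        rw [Summable.tsum_finsetSum fun j _ => ENNReal.summable]
        have : ∀ j ∈ J, ∑' k : Fin n → ℤ, Nq (k + j) = ∑' k : Fin n → ℤ, Nq k := by
          intro j _
          exact Equiv.tsum_eq (Equiv.addRight j) Nq
        rw [Finset.sum_congr rfl this, Finset.sum_const, card_piFinset_Icc, nsmul_eq_mul]
    _ = ENNReal.ofReal (A₁ * (3^n:ℕ)) * (ENNReal.ofReal (t ^ n) * ∑' k : Fin n → ℤ, Nq k) := by
        rw [ENNReal.ofReal_mul hA₁0.le, ENNReal.ofReal_natCast]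
        ring

lemma lower_bound {Φ : ℝ → ℝ} {Cl pm : ℝ} (hΦ : IsOrlicz Φ) (hCl : 0 < Cl) (hpm : 0 < pm)
    (hlow : ∀ u, 0 ≤ u → ∀ s : ℝ, 0 < s → s < 1 → Φ (s * u) ≤ Cl * s ^ pm * Φ u)
    {q : ℝ} (hq : 0 < q) {t : ℝ} (ht : 0 < t) {f : Rn n → ℝ} (hf : Measurable f) :
    (ENNReal.ofReal (t ^ n) *
        ∑' k : Fin n → ℤ, orliczNorm Φ ((tCube n t k).indicator fun x => ENNReal.ofReal |f x|) ^ q)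
      ≤ ENNReal.ofReal ((max 2 ((Cl * ((n+1)^n:ℕ)) ^ (1/pm)) * ((n+1)^n:ℕ)) ^ q * ((n+1)^n:ℕ)) *
        (∫⁻ x, orliczNorm Φ ((Metric.ball x t).indicator fun y => ENNReal.ofReal |f y|) ^ q) := by
  set F : Rn n → ℝ≥0∞ := fun y => ENNReal.ofReal |f y| with hF
  have hFm : Measurable F := hf.abs.ennreal_ofReal
  set s : ℝ := t / (n + 1) with hs
  have hn1 : (0:ℝ) < (n:ℝ) + 1 := by positivity
  have hs0 : 0 < s := by positivity
  set J : Finset (Fin n → ℤ) := Fintype.piFinset fun _ : Fin n => Finset.Ico (0 : ℤ) (n + 1) with hJ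
  set A₂ : ℝ := (max 2 ((Cl * ((n+1)^n:ℕ)) ^ (1/pm)) * ((n+1)^n:ℕ)) ^ q with hA₂
  have hA₂0 : 0 < A₂ := by
    have h1 : (0:ℝ) < max 2 ((Cl * ((n+1)^n:ℕ)) ^ (1/pm)) := lt_of_lt_of_le two_pos (le_max_left _ _)
    have h2 : (0:ℝ) < (((n+1)^n : ℕ):ℝ) := by positivity
    positivity
  set Nq : (Fin n → ℤ) → ℝ≥0∞ := fun k => orliczNorm Φ ((tCube n t k).indicator F) ^ q with hNq
  set Pq : (Fin n → ℤ) → ℝ≥0∞ := fun k => orliczNorm Φ ((tCube n s k).indicator F) ^ q with hPq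
  set G : Rn n → ℝ≥0∞ := fun x => orliczNorm Φ ((Metric.ball x t).indicator F) ^ q with hG
  set φ : (Fin n → ℤ) → (Fin n → ℤ) → (Fin n → ℤ) := fun k j i => (n + 1) * k i + j i with hφ
  -- Step 1: each big cube norm is controlled by the small cubes inside it
  have step1 : ∀ k : Fin n → ℤ, Nq k ≤ ENNReal.ofReal A₂ * ∑ j ∈ J, Pq (φ k j) := by
    intro k
    have hpt : ∀ y, (tCube n t k).indicator F y ≤
        ∑ j ∈ J, ((tCube n s (φ k j)).indicator F) y := by
      intro y
      rcases em (y ∈ tCube n t k) with hy | hy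
      · obtain ⟨j, hjJ, hjy⟩ := cube_subset_smallcubes ht hy
        rw [indicator_of_mem hy]
        calc F y = ((tCube n s (φ k j)).indicator F) y := (indicator_of_mem hjy F).symm
          _ ≤ ∑ j ∈ J, ((tCube n s (φ k j)).indicator F) y :=
            Finset.single_le_sum (f := fun j => ((tCube n s (φ k j)).indicator F) y)
              (fun _ _ => zero_le) hjJ
      · rw [indicator_of_notMem hy]; exact zero_le
    calc Nq k ≤ orliczNorm Φ (fun y => ∑ j ∈ J, ((tCube n s (φ k j)).indicator F) y) ^ q :=
          ENNReal.rpow_le_rpow (orliczNorm_mono hΦ hpt) hq.le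
      _ ≤ ENNReal.ofReal A₂ * ∑ j ∈ J, Pq (φ k j) := by
          rw [hA₂]
          apply key_sum_q hΦ hCl hpm hlow hq ((n+1)^n) (Nat.one_le_pow _ _ (by omega)) J
            (le_of_eq card_piFinset_Ico) _ (fun j => hFm.indicator tCube_measurable)
  -- Step 2: the doubly-indexed sum of small cubes injects into all small cubes
  have step2 : ∑' k : Fin n → ℤ, ∑ j ∈ J, Pq (φ k j) ≤ ∑' k' : Fin n → ℤ, Pq k' := by
    have h1 : ∀ k : Fin n → ℤ, ∑ j ∈ J, Pq (φ k j) = ∑' j : {x // x ∈ J}, Pq (φ k j.1) := by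
      intro k
      exact (Finset.tsum_subtype J fun j => Pq (φ k j)).symm
    calc ∑' k : Fin n → ℤ, ∑ j ∈ J, Pq (φ k j)
        = ∑' k : Fin n → ℤ, ∑' j : {x // x ∈ J}, Pq (φ k j.1) := by
          exact tsum_congr h1
      _ = ∑' p : (Fin n → ℤ) × {x // x ∈ J}, Pq (φ p.1 p.2.1) := ENNReal.tsum_prod.symm
      _ ≤ ∑' k' : Fin n → ℤ, Pq k' := by
          apply ENNReal.tsum_comp_le_tsum_of_injective
          rintro ⟨k, j, hj⟩ ⟨k', j', hj'⟩ he
          rw [Fintype.mem_piFinset] at hj hj'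
          simp only [Prod.mk.injEq, Subtype.mk.injEq]
          have : ∀ i, (n + 1) * k i + j i = (n + 1) * k' i + j' i := fun i => congrFun he i
          have hm : ((n:ℤ)+1) ≠ 0 := by omega
          have key : ∀ (a a' b b' : ℤ), 0 ≤ b → b < (n:ℤ)+1 → 0 ≤ b' → b' < (n:ℤ)+1 →
              ((n:ℤ)+1)*a + b = ((n:ℤ)+1)*a' + b' → a = a' ∧ b = b' := by
            intro a a' b b' hb0 hbm hb0' hbm' hE
            have h1 : (((n:ℤ)+1)*a + b) / ((n:ℤ)+1) = a := by
              rw [add_comm, Int.add_mul_ediv_left _ _ hm,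
                Int.ediv_eq_zero_of_lt hb0 hbm, zero_add]
            have h1' : (((n:ℤ)+1)*a' + b') / ((n:ℤ)+1) = a' := by
              rw [add_comm, Int.add_mul_ediv_left _ _ hm,
                Int.ediv_eq_zero_of_lt hb0' hbm', zero_add]
            have ha : a = a' := by rw [← h1, ← h1', hE]
            refine ⟨ha, ?_⟩
            rw [ha] at hE
            exact add_left_cancel hE
          have hcomp : ∀ i, k i = k' i ∧ j i = j' i := by
            intro i
            have hji := hj i
            have hji' := hj' i
            rw [Finset.mem_Ico] at hji hji'
            exact key _ _ _ _ hji.1 hji.2 hji'.1 hji'.2 (this i)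
          exact ⟨funext fun i => (hcomp i).1, funext fun i => (hcomp i).2⟩
  -- Step 3: each small cube is captured by the balls centred in it
  have step3 : ∑' k' : Fin n → ℤ, ENNReal.ofReal (s ^ n) * Pq k' ≤ ∫⁻ x, G x := by
    rw [lintegral_tsum_tCube hs0 G]
    apply ENNReal.tsum_le_tsum
    intro k'
    calc ENNReal.ofReal (s ^ n) * Pq k' = Pq k' * volume (tCube n s k') := by
          rw [volume_tCube hs0]; ring
      _ = ∫⁻ _x in tCube n s k', Pq k' := (setLIntegral_const _ _).symm
      _ ≤ ∫⁻ x in tCube n s k', G x := by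
          apply lintegral_mono_ae
          apply (ae_restrict_iff' tCube_measurable).2
          apply ae_of_all
          intro x hx
          apply ENNReal.rpow_le_rpow _ hq.le
          apply orliczNorm_mono hΦ
          intro y
          exact indicator_le_indicator_of_subset (smallcube_subset_ball ht hx) (fun _ => zero_le) y
  -- assemble
  have hts : t ^ n = ((n:ℝ)+1) ^ n * s ^ n := by
    rw [← mul_pow]
    congr 1
    rw [hs]; field_simp
  calc ENNReal.ofReal (t ^ n) * ∑' k : Fin n → ℤ, Nq k
      ≤ ENNReal.ofReal (t ^ n) * ∑' k : Fin n → ℤ, (ENNReal.ofReal A₂ * ∑ j ∈ J, Pq (φ k j)) :=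
        mul_le_mul_right (ENNReal.tsum_le_tsum step1) _
    _ = ENNReal.ofReal (t ^ n) * ENNReal.ofReal A₂ * ∑' k : Fin n → ℤ, ∑ j ∈ J, Pq (φ k j) := by
        rw [ENNReal.tsum_mul_left]; ring
    _ ≤ ENNReal.ofReal (t ^ n) * ENNReal.ofReal A₂ * ∑' k' : Fin n → ℤ, Pq k' :=
        mul_le_mul_right step2 _
    _ = ENNReal.ofReal A₂ * ENNReal.ofReal (((n:ℝ)+1) ^ n) *
          ∑' k' : Fin n → ℤ, ENNReal.ofReal (s ^ n) * Pq k' := by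
        rw [ENNReal.tsum_mul_left, hts, ENNReal.ofReal_mul (by positivity)]
        ring
    _ ≤ ENNReal.ofReal A₂ * ENNReal.ofReal (((n:ℝ)+1) ^ n) * ∫⁻ x, G x :=
        mul_le_mul_right step3 _
    _ = ENNReal.ofReal (A₂ * ((n+1)^n:ℕ)) * ∫⁻ x, G x := by
        rw [ENNReal.ofReal_mul hA₂0.le]
        congr 2
        congr 1
        push_cast
        ring

/-- the Orlicz-slice space coincides with the Orlicz-amalgam space,
with equivalent quasi-norms whose constants are independent of `t` and `f`. -/
theorem orliczSlice_eq_orliczAmalgam {n : ℕ} (q : ℝ) (hq : 0 < q) (Φ : ℝ → ℝ)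
    (pm pp : ℝ) (hpm : 0 < pm) (hpp : 0 < pp) (hΦ : IsOrlicz Φ)
    (hlow : IsLowerType Φ pm) (hup : IsUpperType Φ pp) :
    ∃ c₁ c₂ : ℝ, 0 < c₁ ∧ 0 < c₂ ∧ ∀ t : ℝ, 0 < t → ∀ f : Rn n → ℝ, Measurable f →
      ENNReal.ofReal c₁ *
          (ENNReal.ofReal (t ^ n) *
            ∑' k : Fin n → ℤ,
              orliczNorm Φ ((tCube n t k).indicator fun x => ENNReal.ofReal |f x|) ^ q) ^ (1 / q) ≤
        (∫⁻ x, orliczNorm Φ ((Metric.ball x t).indicator fun y => ENNReal.ofReal |f y|) ^ q) ^ (1 / q) ∧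
      (∫⁻ x, orliczNorm Φ ((Metric.ball x t).indicator fun y => ENNReal.ofReal |f y|) ^ q) ^ (1 / q) ≤
        ENNReal.ofReal c₂ *
          (ENNReal.ofReal (t ^ n) *
            ∑' k : Fin n → ℤ,
              orliczNorm Φ ((tCube n t k).indicator fun x => ENNReal.ofReal |f x|) ^ q) ^ (1 / q) := by
  obtain ⟨Cl, hCl, hlow'⟩ := hlow
  set B₁ : ℝ := (max 2 ((Cl * ((n+1)^n:ℕ)) ^ (1/pm)) * ((n+1)^n:ℕ)) ^ q * ((n+1)^n:ℕ) with hB₁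
  set B₂ : ℝ := (max 2 ((Cl * (3^n:ℕ)) ^ (1/pm)) * (3^n:ℕ)) ^ q * (3^n:ℕ) with hB₂
  have hB₁0 : 0 < B₁ := by
    have h1 : (0:ℝ) < max 2 ((Cl * ((n+1)^n:ℕ)) ^ (1/pm)) := lt_of_lt_of_le two_pos (le_max_left _ _)
    have h2 : (0:ℝ) < (((n+1)^n : ℕ):ℝ) := by positivity
    positivity
  have hB₂0 : 0 < B₂ := by
    have h1 : (0:ℝ) < max 2 ((Cl * (3^n:ℕ)) ^ (1/pm)) := lt_of_lt_of_le two_pos (le_max_left _ _)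
    have h2 : (0:ℝ) < ((3^n : ℕ):ℝ) := by positivity
    positivity
  refine ⟨(B₁ ^ (1/q))⁻¹, B₂ ^ (1/q), by positivity, by positivity, ?_⟩
  intro t ht f hf
  set X : ℝ≥0∞ := ENNReal.ofReal (t ^ n) *
    ∑' k : Fin n → ℤ, orliczNorm Φ ((tCube n t k).indicator fun x => ENNReal.ofReal |f x|) ^ q with hX
  set I : ℝ≥0∞ := ∫⁻ x, orliczNorm Φ ((Metric.ball x t).indicator fun y => ENNReal.ofReal |f y|) ^ q
    with hI
  have hU : I ≤ ENNReal.ofReal B₂ * X := upper_bound hΦ hCl hpm hlow' hq ht hf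
  have hL : X ≤ ENNReal.ofReal B₁ * I := lower_bound hΦ hCl hpm hlow' hq ht hf
  constructor
  · -- lower estimate
    have h1 : X ^ (1/q) ≤ ENNReal.ofReal (B₁ ^ (1/q)) * I ^ (1/q) := by
      calc X ^ (1/q) ≤ (ENNReal.ofReal B₁ * I) ^ (1/q) :=
            ENNReal.rpow_le_rpow hL (by positivity)
        _ = ENNReal.ofReal B₁ ^ (1/q) * I ^ (1/q) := ENNReal.mul_rpow_of_nonneg _ _ (by positivity)
        _ = ENNReal.ofReal (B₁ ^ (1/q)) * I ^ (1/q) := by rw [ENNReal.ofReal_rpow_of_pos hB₁0]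
    calc ENNReal.ofReal (B₁ ^ (1/q))⁻¹ * X ^ (1/q)
        ≤ ENNReal.ofReal (B₁ ^ (1/q))⁻¹ * (ENNReal.ofReal (B₁ ^ (1/q)) * I ^ (1/q)) :=
          mul_le_mul_right h1 _
      _ = ENNReal.ofReal ((B₁ ^ (1/q))⁻¹ * B₁ ^ (1/q)) * I ^ (1/q) := by
          rw [ENNReal.ofReal_mul (by positivity), mul_assoc]
      _ = I ^ (1/q) := by
          rw [inv_mul_cancel₀ (by positivity : (B₁ ^ (1/q)) ≠ 0), ENNReal.ofReal_one, one_mul]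
  · -- upper estimate
    calc I ^ (1/q) ≤ (ENNReal.ofReal B₂ * X) ^ (1/q) := ENNReal.rpow_le_rpow hU (by positivity)
      _ = ENNReal.ofReal B₂ ^ (1/q) * X ^ (1/q) := ENNReal.mul_rpow_of_nonneg _ _ (by positivity)
      _ = ENNReal.ofReal (B₂ ^ (1/q)) * X ^ (1/q) := by rw [ENNReal.ofReal_rpow_of_pos hB₂0]


end
end
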